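/- arXiv:1610.02832 — 2 statements merged into one kernel-verified Lean document; each statement's English description precedes it below -/
import Mathlib

section
/- The axiom of dependent choices DC_κ for a regular cardinal κ implies the forcing axiom FA_κ for <κ-closed partial orders: if (P, ≤) is a partial order in which every decreasing chain of length < κ has a lower bound, and {D_α : α < κ} is a family of dense subsets of P, then there is a filter G on P meeting every D_α. -/
universe u

/-- The principle of dependent choices `DC_κ`: for every nonempty set `X` and every
function `F` assigning a nonempty subset of `X` to each sequence in `X` of length `< κ`,
there is `g : κ → X` with `g(α) ∈ F(g ↾ α)` for all `α < κ`.  Sequences of length `< κ`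
are represented as functions on proper initial segments of `κ.ord.ToType`. -/
def DepChoice (κ : Cardinal.{u}) : Prop :=
  ∀ (X : Type u) [Nonempty X]
    (F : (Σ i : κ.ord.ToType, ({j : κ.ord.ToType // j < i} → X)) → Set X),
    (∀ s, (F s).Nonempty) →
    ∃ g : κ.ord.ToType → X, ∀ i, g i ∈ F ⟨i, fun j => g j.1⟩

/-- `DC_κ` for a regular cardinal `κ` implies the forcing axiom `FA_κ` for `<κ`-closed
partial orders: if every decreasing chain in `P` of length `< κ` has a lower bound and
`{D_α : α < κ}` is a family of dense subsets of `P`, then there is a filter on `P`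
meeting every `D_α`. -/
theorem dc_implies_fa (κ : Cardinal.{u}) (hreg : κ.IsRegular) (hDC : DepChoice κ)
    (P : Type u) [Preorder P] [Nonempty P]
    (hclosed : ∀ (i : κ.ord.ToType) (f : {j : κ.ord.ToType // j < i} → P),
      (∀ j k : {j : κ.ord.ToType // j < i}, j ≤ k → f k ≤ f j) →
      ∃ p : P, ∀ j, p ≤ f j)
    (D : κ.ord.ToType → Set P)
    (hdense : ∀ i, ∀ p : P, ∃ q ∈ D i, q ≤ p) :
    ∃ G : Set P, G.Nonempty ∧
      (∀ p ∈ G, ∀ q : P, p ≤ q → q ∈ G) ∧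
      (∀ p ∈ G, ∀ q ∈ G, ∃ r ∈ G, r ≤ p ∧ r ≤ q) ∧
      (∀ i, (G ∩ D i).Nonempty) := by
  classical
  have hne : Nonempty κ.ord.ToType := by
    rw [Ordinal.toType_nonempty_iff_ne_zero]
    intro h
    have : κ = 0 := by
      have := congrArg Ordinal.card h
      simpa [Cardinal.card_ord] using this
    exact hreg.pos.ne' this
  set F : (Σ i : κ.ord.ToType, ({j : κ.ord.ToType // j < i} → P)) → Set P := fun s =>
    if ∀ j k : {j : κ.ord.ToType // j < s.1}, j ≤ k → s.2 k ≤ s.2 j then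
      {p | p ∈ D s.1 ∧ ∀ j, p ≤ s.2 j}
    else Set.univ with hF
  have hFne : ∀ s, (F s).Nonempty := by
    rintro ⟨i, f⟩
    by_cases h : ∀ j k : {j : κ.ord.ToType // j < i}, j ≤ k → f k ≤ f j
    · obtain ⟨p, hp⟩ := hclosed i f h
      obtain ⟨q, hq, hqp⟩ := hdense i p
      refine ⟨q, ?_⟩
      simp only [hF, if_pos h]
      exact ⟨hq, fun j => hqp.trans (hp j)⟩
    · exact ⟨Classical.arbitrary P, by simp only [hF, if_neg h]; trivial⟩
  obtain ⟨g, hg⟩ := hDC P F hFne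
  have key : ∀ i : κ.ord.ToType, g i ∈ D i ∧ ∀ j, j < i → g i ≤ g j := by
    intro i
    induction i using WellFoundedLT.induction with
    | ind i IH =>
      have hmono : ∀ j k : {j : κ.ord.ToType // j < i}, j ≤ k →
          (fun j : {j : κ.ord.ToType // j < i} => g j.1) k ≤
          (fun j : {j : κ.ord.ToType // j < i} => g j.1) j := by
        intro j k hjk
        rcases eq_or_lt_of_le hjk with rfl | hlt
        · exact le_refl _
        · exact (IH k.1 k.2).2 j.1 (Subtype.coe_lt_coe.2 hlt)
      have hgi := hg i
      simp only [hF, if_pos hmono] at hgi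
      exact ⟨hgi.1, fun j hj => hgi.2 ⟨j, hj⟩⟩
  refine ⟨{q | ∃ i, g i ≤ q}, ⟨g (Classical.arbitrary _), Classical.arbitrary _, le_refl _⟩,
    ?_, ?_, ?_⟩
  · rintro p ⟨i, hi⟩ q hpq
    exact ⟨i, hi.trans hpq⟩
  · rintro p ⟨i, hi⟩ q ⟨i', hi'⟩
    rcases lt_trichotomy i i' with h | rfl | h
    · exact ⟨g i', ⟨i', le_refl _⟩, ((key i').2 i h).trans hi, hi'⟩
    · exact ⟨g i, ⟨i, le_refl _⟩, hi, hi'⟩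
    · exact ⟨g i, ⟨i, le_refl _⟩, hi, ((key i).2 i' h).trans hi'⟩
  · intro i
    exact ⟨g i, ⟨i, le_refl _⟩, (key i).1⟩
end

section
/- A Boolean algebra B is complete if and only if its Stone space St(B) is extremally disconnected, i.e., the closure of every open subset of St(B) is open. -/
/-- An ultrafilter on a Boolean algebra `B`: an upward closed, meet-closed set
avoiding `⊥` which, for every `a`, contains `a` or its complement. -/
structure BAUltrafilter (B : Type*) [BooleanAlgebra B] where
  carrier : Set B
  upward : ∀ a ∈ carrier, ∀ b : B, a ≤ b → b ∈ carrier
  inf_mem : ∀ a ∈ carrier, ∀ b ∈ carrier, a ⊓ b ∈ carrier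
  bot_not_mem : ⊥ ∉ carrier
  ultra : ∀ a : B, a ∈ carrier ∨ aᶜ ∈ carrier

/-- The Stone topology on the space of ultrafilters of `B`, generated by the
basic (clopen) sets `N_b = {G : b ∈ G}`. -/
instance stoneTopology (B : Type*) [BooleanAlgebra B] :
    TopologicalSpace (BAUltrafilter B) :=
  TopologicalSpace.generateFrom {S | ∃ b : B, S = {G : BAUltrafilter B | b ∈ G.carrier}}

namespace BAUltrafilter

variable {B : Type*} [BooleanAlgebra B]

/-- The basic set `N_b`. -/
def Nb (b : B) : Set (BAUltrafilter B) := {G : BAUltrafilter B | b ∈ G.carrier}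

lemma not_mem_of_compl_mem {G : BAUltrafilter B} {a : B} (h : aᶜ ∈ G.carrier) :
    a ∉ G.carrier := fun ha =>
  G.bot_not_mem (by simpa using G.inf_mem a ha aᶜ h)

lemma compl_mem_iff {G : BAUltrafilter B} {a : B} : aᶜ ∈ G.carrier ↔ a ∉ G.carrier := by
  constructor
  · exact not_mem_of_compl_mem
  · intro h; rcases G.ultra a with h' | h'
    · exact absurd h' h
    · exact h'

lemma top_mem (G : BAUltrafilter B) : (⊤ : B) ∈ G.carrier := by
  rcases G.ultra ⊤ with h | h
  · exact h
  · simpa using absurd (by simpa using h) G.bot_not_mem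

lemma Nb_inf (a b : B) : Nb (a ⊓ b) = Nb a ∩ Nb b := by
  ext G
  constructor
  · intro h
    exact ⟨G.upward _ h a inf_le_left, G.upward _ h b inf_le_right⟩
  · rintro ⟨h1, h2⟩
    exact G.inf_mem a h1 b h2

lemma Nb_compl (a : B) : Nb (aᶜ) = (Nb a)ᶜ := by
  ext G; exact compl_mem_iff

lemma Nb_sup (a b : B) : Nb (a ⊔ b) = Nb a ∪ Nb b := by
  ext G
  constructor
  · intro h
    by_contra hc
    rw [Set.mem_union, not_or] at hc
    have h1 : aᶜ ∈ G.carrier := compl_mem_iff.2 hc.1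
    have h2 : bᶜ ∈ G.carrier := compl_mem_iff.2 hc.2
    have := G.inf_mem _ h1 _ h2
    rw [← compl_sup] at this
    exact not_mem_of_compl_mem this h
  · rintro (h | h)
    · exact G.upward a h _ le_sup_left
    · exact G.upward b h _ le_sup_right

lemma Nb_bot : Nb (⊥ : B) = ∅ := by
  ext G; simp [Nb, G.bot_not_mem]

lemma Nb_top : Nb (⊤ : B) = Set.univ := by
  ext G; simp [Nb, top_mem]

lemma Nb_mono {a b : B} (h : a ≤ b) : Nb a ⊆ Nb b :=
  fun G hG => G.upward a hG b h

/-- Existence of ultrafilters containing a fixed nonzero element (Zorn). -/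
lemma exists_mem {b : B} (hb : b ≠ ⊥) : ∃ G : BAUltrafilter B, b ∈ G.carrier := by
  set S : Set (Set B) :=
    {F | (∀ a ∈ F, ∀ c : B, a ≤ c → c ∈ F) ∧ (∀ a ∈ F, ∀ c ∈ F, a ⊓ c ∈ F) ∧ ⊥ ∉ F ∧ b ∈ F}
    with hS
  have h0 : {c : B | b ≤ c} ∈ S := by
    refine ⟨fun a ha c hc => le_trans ha hc, fun a ha c hc => le_inf ha hc, ?_, le_refl b⟩
    intro h; exact hb (le_bot_iff.mp h)
  have hZ : ∀ c ⊆ S, IsChain (· ⊆ ·) c → c.Nonempty → ∃ ub ∈ S, ∀ s ∈ c, s ⊆ ub := by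
    intro c hcS hchain hcne
    obtain ⟨F0, hF0⟩ := hcne
    refine ⟨⋃₀ c, ⟨?_, ?_, ?_, ?_⟩, fun s hs => Set.subset_sUnion_of_mem hs⟩
    · rintro x ⟨F, hF, hx⟩ y hxy
      exact ⟨F, hF, (hcS hF).1 x hx y hxy⟩
    · rintro x ⟨F, hF, hx⟩ y ⟨F', hF', hy⟩
      rcases hchain.total hF hF' with h | h
      · exact ⟨F', hF', (hcS hF').2.1 x (h hx) y hy⟩
      · exact ⟨F, hF, (hcS hF).2.1 x hx y (h hy)⟩
    · rintro ⟨F, hF, hx⟩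
      exact (hcS hF).2.2.1 hx
    · exact ⟨F0, hF0, (hcS hF0).2.2.2⟩
  obtain ⟨M, hM0, hM⟩ := zorn_subset_nonempty S hZ _ h0
  · obtain ⟨hup, hinf, hbot, hbM⟩ := hM.prop
    have hultra : ∀ a : B, a ∈ M ∨ aᶜ ∈ M := by
      intro a
      by_contra hc
      push_neg at hc
      obtain ⟨ha, hac⟩ := hc
      set M' : Set B := {x | ∃ m ∈ M, m ⊓ a ≤ x} with hM'
      have hMM' : M ⊆ M' := fun m hm => ⟨m, hm, inf_le_left⟩
      have haM' : a ∈ M' := ⟨b, hbM, inf_le_right⟩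
      have hM'S : M' ∈ S := by
        refine ⟨?_, ?_, ?_, hMM' hbM⟩
        · rintro x ⟨m, hm, hle⟩ c hc
          exact ⟨m, hm, hle.trans hc⟩
        · rintro x ⟨m, hm, hle⟩ y ⟨n, hn, hle'⟩
          refine ⟨m ⊓ n, hinf m hm n hn, le_inf ?_ ?_⟩
          · exact le_trans (by gcongr; exact inf_le_left) hle
          · exact le_trans (by gcongr; exact inf_le_right) hle'
        · rintro ⟨m, hm, hle⟩
          have : m ≤ aᶜ := le_compl_iff_disjoint_right.2 (disjoint_iff.2 (le_bot_iff.mp hle))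
          exact hac (hup m hm aᶜ this)
      have := hM.2 hM'S hMM'
      exact ha (this haM')
    exact ⟨⟨M, hup, hinf, hbot, hultra⟩, hbM⟩

lemma Nb_eq_empty_iff {a : B} : Nb a = ∅ ↔ a = ⊥ := by
  constructor
  · intro h
    by_contra ha
    obtain ⟨G, hG⟩ := exists_mem ha
    exact Set.eq_empty_iff_forall_notMem.mp h G hG
  · rintro rfl; exact Nb_bot

lemma Nb_subset_iff {a b : B} : Nb a ⊆ Nb b ↔ a ≤ b := by
  constructor
  · intro h
    by_contra hab
    have : a ⊓ bᶜ ≠ ⊥ := by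
      intro he
      exact hab (sdiff_eq_bot_iff.mp (by rwa [sdiff_eq]))
    obtain ⟨G, hG⟩ := exists_mem this
    have ha : a ∈ G.carrier := G.upward _ hG a inf_le_left
    have hbc : bᶜ ∈ G.carrier := G.upward _ hG bᶜ inf_le_right
    exact not_mem_of_compl_mem hbc (h ha)
  · exact Nb_mono

lemma isBasis :
    TopologicalSpace.IsTopologicalBasis
      {S | ∃ b : B, S = {G : BAUltrafilter B | b ∈ G.carrier}} := by
  refine ⟨?_, ?_, rfl⟩
  · rintro t1 ⟨a, rfl⟩ t2 ⟨b, rfl⟩ G hG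
    refine ⟨Nb (a ⊓ b), ⟨a ⊓ b, rfl⟩, ?_, ?_⟩
    · exact G.inf_mem a hG.1 b hG.2
    · rw [Nb_inf]; exact fun _ h => h
  · apply Set.eq_univ_of_univ_subset
    intro G _
    exact ⟨Nb ⊤, ⟨⊤, rfl⟩, top_mem G⟩

lemma isOpen_Nb (b : B) : IsOpen (Nb b) :=
  isBasis.isOpen ⟨b, rfl⟩

lemma isClosed_Nb (b : B) : IsClosed (Nb b) := by
  rw [← isOpen_compl_iff, ← Nb_compl]
  exact isOpen_Nb _

instance : CompactSpace (BAUltrafilter B) := by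
  refine ⟨isCompact_iff_ultrafilter_le_nhds.2 fun f _ => ?_⟩
  set G : BAUltrafilter B :=
    { carrier := {b : B | Nb b ∈ f}
      upward := fun a ha b hab => f.mem_of_superset ha (Nb_mono hab)
      inf_mem := fun a ha b hb => by
        show Nb (a ⊓ b) ∈ f
        rw [Nb_inf]; exact Filter.inter_mem ha hb
      bot_not_mem := by
        show Nb (⊥ : B) ∉ f
        rw [Nb_bot]; exact f.empty_notMem
      ultra := fun a => by
        rcases f.mem_or_compl_mem (Nb a) with h | h
        · exact Or.inl h
        · exact Or.inr (by show Nb (aᶜ) ∈ f; rwa [Nb_compl]) }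
  refine ⟨G, ?_, ?_⟩
  · trivial
  · rw [(isBasis.nhds_hasBasis (a := G)).ge_iff]
    rintro t ⟨⟨b, rfl⟩, hGt⟩
    exact hGt

theorem main :
    (∀ S : Set B, ∃ b : B, IsLUB S b) ↔ ExtremallyDisconnected (BAUltrafilter B) := by
  constructor
  · -- complete ⇒ extremally disconnected
    intro hcomp
    refine ⟨fun U hU => ?_⟩
    set S : Set B := {b : B | Nb b ⊆ U} with hSdef
    obtain ⟨c, hc⟩ := hcomp S
    have hUc : U ⊆ Nb c := by
      intro G hG
      obtain ⟨t, ⟨b, rfl⟩, hGt, htU⟩ := isBasis.exists_subset_of_mem_open hG hU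
      exact Nb_mono (hc.1 htU) hGt
    have hclU : closure U = Nb c := by
      apply subset_antisymm
      · exact closure_minimal hUc (isClosed_Nb c)
      · intro G hG
        rw [isBasis.mem_closure_iff]
        rintro t ⟨a, rfl⟩ hGt
        by_contra hne
        rw [Set.not_nonempty_iff_eq_empty] at hne
        -- for every b ∈ S, Nb a ∩ Nb b = ∅, so a ⊓ b = ⊥, so b ≤ aᶜ
        have hub : aᶜ ∈ upperBounds S := by
          intro b hb
          have h1 : Nb (a ⊓ b) = ∅ := by
            rw [Nb_inf]
            exact Set.eq_empty_of_subset_empty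
              (hne ▸ Set.inter_subset_inter_right _ hb)
          have h2 : a ⊓ b = ⊥ := Nb_eq_empty_iff.1 h1
          exact (disjoint_iff.2 h2).symm.le_compl_right
        have hca : c ≤ aᶜ := hc.2 hub
        have : aᶜ ∈ G.carrier := G.upward c hG _ hca
        exact not_mem_of_compl_mem this hGt
    rw [hclU]
    exact isOpen_Nb c
  · -- extremally disconnected ⇒ complete
    intro hED S
    set U : Set (BAUltrafilter B) := ⋃ b ∈ S, Nb b with hUdef
    have hUopen : IsOpen U := isOpen_biUnion fun b _ => isOpen_Nb b
    have hKopen : IsOpen (closure U) := hED.open_closure U hUopen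
    have hKcompact : IsCompact (closure U) := isClosed_closure.isCompact
    -- cover closure U by basic sets inside it
    have hcover : closure U ⊆ ⋃ b ∈ {b : B | Nb b ⊆ closure U}, Nb b := by
      intro G hG
      obtain ⟨t, ⟨b, rfl⟩, hGt, htK⟩ := isBasis.exists_subset_of_mem_open hG hKopen
      exact Set.mem_biUnion htK hGt
    obtain ⟨T, hTsub, hTfin, hTcover⟩ :=
      hKcompact.elim_finite_subcover_image (fun b _ => isOpen_Nb b) hcover
    set c : B := hTfin.toFinset.sup id with hcdef
    have hNc : Nb c = ⋃ b ∈ T, Nb b := by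
      have : ∀ (F : Finset B), Nb (F.sup id) = ⋃ b ∈ F, Nb b := by
        classical
        intro F
        induction F using Finset.induction_on with
        | empty => simp [Nb_bot]
        | insert _ _ h ih =>
          rw [Finset.sup_insert, Nb_sup, ih]
          simp
      rw [hcdef, this]
      ext G
      simp only [Set.mem_iUnion, Set.Finite.mem_toFinset]
    have hKNc : closure U = Nb c := by
      apply subset_antisymm
      · rwa [hNc]
      · rw [hNc]
        exact Set.iUnion₂_subset fun b hb => hTsub hb
    refine ⟨c, ?_, ?_⟩
    · intro b hb
      rw [← Nb_subset_iff]
      calc Nb b ⊆ U := Set.subset_biUnion_of_mem hb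
        _ ⊆ closure U := subset_closure
        _ = Nb c := hKNc
    · intro d hd
      rw [← Nb_subset_iff, ← hKNc]
      apply closure_minimal _ (isClosed_Nb d)
      exact Set.iUnion₂_subset fun b hb => Nb_mono (hd hb)

end BAUltrafilter

/-- A Boolean algebra `B` is complete (every subset has a supremum) iff its Stone
space is extremally disconnected (the closure of every open set is open). -/
theorem complete_iff_stone_extremallyDisconnected (B : Type*) [BooleanAlgebra B] :
    (∀ S : Set B, ∃ b : B, IsLUB S b) ↔ ExtremallyDisconnected (BAUltrafilter B) := by
  exact BAUltrafilter.main
end
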